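/- For every complex number s with Re(s) > −1: Σ_{d=1}^{∞} Q(d)·d^{−s} = (ζ(s+2)/ζ(2s+4)) · ∏_{p prime} (1 + (2p² + p − 1)/((p⁴ − 2p² − p + 1)(1 + p^{2+s}))), where the Dirichlet series on the left converges absolutely and the Euler product on the right converges. -/

import Mathlib

/-- `Q(d) = μ(d)² ∏_{p ∣ d} p² / (p⁴ - 2p² - p + 1)`. -/
noncomputable def Qfun (d : ℕ) : ℝ :=
  ((ArithmeticFunction.moebius d : ℤ) : ℝ) ^ 2 *
    ∏ p ∈ d.primeFactors, (p : ℝ) ^ 2 / ((p : ℝ) ^ 4 - 2 * (p : ℝ) ^ 2 - (p : ℝ) + 1)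

/-- The Euler factor at `p` of the product representing `Σ Q(d) d^{-s}`. -/
noncomputable def eulerFac (s : ℂ) (p : Nat.Primes) : ℂ :=
  1 + (2 * ((p : ℕ) : ℂ) ^ 2 + ((p : ℕ) : ℂ) - 1) /
    ((((p : ℕ) : ℂ) ^ 4 - 2 * ((p : ℕ) : ℂ) ^ 2 - ((p : ℕ) : ℂ) + 1) *
      (1 + ((p : ℕ) : ℂ) ^ ((2 : ℂ) + s)))

/-!
`Q` is multiplicative and supported on squarefree numbers, with `Q(p) = p²/(p⁴ - 2p² - p + 1) ≤ 4/p²`.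
For `Re s > -1` the partial sums of `Σ |Q(d) d^{-s}|` are bounded by
`∏_p (1 + |Q(p) p^{-s}|) ≤ exp (Σ_p 4 p^{-2-Re s}) < ∞`, so the series converges absolutely and
equals its Euler product `∏_p (1 + Q(p) p^{-s})`. With `y = p^{-(s+2)}`, the identity
`(p⁴ - 2p² - p + 1) + (2p² + p - 1) = p⁴` gives `1 + Q(p) p^{-s} = (1 + y) · eulerFac s p`, and
`1 + y = (1 - y²) / (1 - y)` is the Euler factor of `ζ(s + 2) / ζ(2s + 4)`.
-/

lemma tsum_pow_eq_one_add {R : Type*} [AddCommMonoidWithOne R] [TopologicalSpace R] {f : ℕ → R}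
    (hf₁ : f 1 = 1) {p : ℕ} (hf : ∀ e, 2 ≤ e → f (p ^ e) = 0) :
    ∑' e, f (p ^ e) = 1 + f p := by
  rw [tsum_eq_sum (s := Finset.range 2) fun e he ↦ hf e (not_lt.mp (Finset.mem_range.not.mp he)),
    Finset.sum_range_succ, Finset.sum_range_one, pow_zero, pow_one, hf₁]

lemma summable_of_multiplicative_of_summable_primes {f : ℕ → ℝ} (hf : ∀ n, 0 ≤ f n)
    (hf₀ : f 0 = 0) (hf₁ : f 1 = 1) (hmul : ∀ {m n}, m.Coprime n → f (m * n) = f m * f n)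
    (hsq : ∀ p e, p.Prime → 2 ≤ e → f (p ^ e) = 0)
    (hprimes : Summable fun p : Nat.Primes ↦ f p) : Summable f := by
  refine summable_of_sum_range_le hf (c := Real.exp (∑' p : Nat.Primes, f p)) fun N ↦ ?_
  have hsmooth : HasSum (fun m : N.smoothNumbers ↦ f m) (∏ p ∈ N.primesBelow, (1 + f p)) := by
    have h := (EulerProduct.summable_and_hasSum_smoothNumbers_prod_primesBelow_tsum hf₁ hmul
      (fun {p} hp ↦ summable_of_ne_finset_zero (s := Finset.range 2) fun e he ↦ by
        rw [hsq p e hp (not_lt.mp (Finset.mem_range.not.mp he)), norm_zero]) N).2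
    rwa [Finset.prod_congr rfl fun p hp ↦
      tsum_pow_eq_one_add hf₁ (hsq p · (Nat.prime_of_mem_primesBelow hp))] at h
  have hsub : ∑ p ∈ N.primesBelow, f p ≤ ∑' p : Nat.Primes, f p := by
    rw [← Finset.sum_subtype_of_mem f fun p ↦ Nat.prime_of_mem_primesBelow]
    apply hprimes.sum_le_tsum
    exact fun p _ ↦ hf p
  calc ∑ n ∈ Finset.range N, f n = ∑ n ∈ Finset.range N, N.smoothNumbers.indicator f n := by
        refine Finset.sum_congr rfl fun n hn ↦ ?_
        rcases Nat.eq_zero_or_pos n with rfl | hn₀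
        · simp [Set.indicator_apply, hf₀]
        · exact (Set.indicator_of_mem
            (Nat.mem_smoothNumbers_of_lt hn₀ (Finset.mem_range.mp hn)) f).symm
    _ ≤ ∑' n, N.smoothNumbers.indicator f n :=
        (summable_subtype_iff_indicator.mp hsmooth.summable).sum_le_tsum _
          fun n _ ↦ Set.indicator_nonneg (fun m _ ↦ hf m) n
    _ = ∏ p ∈ N.primesBelow, (1 + f p) := by rw [← tsum_subtype, hsmooth.tsum_eq]
    _ ≤ ∏ p ∈ N.primesBelow, Real.exp (f p) :=
        Finset.prod_le_prod (fun p _ ↦ by linarith [hf p]) fun p _ ↦ by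
          linarith [Real.add_one_le_exp (f p)]
    _ = Real.exp (∑ p ∈ N.primesBelow, f p) := (Real.exp_sum _ _).symm
    _ ≤ Real.exp (∑' p : Nat.Primes, f p) := Real.exp_le_exp.mpr hsub

lemma pow_four_div_four_le {x : ℝ} (hx : 2 ≤ x) : x ^ 4 / 4 ≤ x ^ 4 - 2 * x ^ 2 - x + 1 := by
  nlinarith [mul_le_mul hx hx (by norm_num) (by linarith), sq_nonneg (x ^ 2 - 4)]

lemma quartic_pos {x : ℝ} (hx : 2 ≤ x) : 0 < x ^ 4 - 2 * x ^ 2 - x + 1 := by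
  have hx₀ : 0 < x := by linarith
  exact lt_of_lt_of_le (by positivity) (pow_four_div_four_le hx)

lemma Qfun_zero : Qfun 0 = 0 := by simp [Qfun]

lemma Qfun_one : Qfun 1 = 1 := by simp [Qfun]

lemma Qfun_mul {m n : ℕ} (h : m.Coprime n) : Qfun (m * n) = Qfun m * Qfun n := by
  rcases eq_or_ne m 0 with rfl | hm
  · simp [Qfun_zero]
  rcases eq_or_ne n 0 with rfl | hn
  · simp [Qfun_zero]
  rw [Qfun, Qfun, Qfun, ArithmeticFunction.isMultiplicative_moebius.map_mul_of_coprime h,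
    Nat.primeFactors_mul hm hn, Finset.prod_union h.disjoint_primeFactors]
  push_cast
  ring

lemma Qfun_prime {p : ℕ} (hp : p.Prime) :
    Qfun p = (p : ℝ) ^ 2 / ((p : ℝ) ^ 4 - 2 * (p : ℝ) ^ 2 - (p : ℝ) + 1) := by
  simp [Qfun, ArithmeticFunction.moebius_apply_prime hp, hp.primeFactors]

lemma Qfun_prime_pow {p e : ℕ} (hp : p.Prime) (he : 2 ≤ e) : Qfun (p ^ e) = 0 := by
  rw [Qfun, ArithmeticFunction.moebius_apply_prime_pow hp (by omega), if_neg (by omega)]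
  simp

lemma Qfun_nonneg (d : ℕ) : 0 ≤ Qfun d :=
  mul_nonneg (sq_nonneg _) <| Finset.prod_nonneg fun p hp ↦ by
    have hp2 : (2 : ℝ) ≤ p := by exact_mod_cast (Nat.prime_of_mem_primeFactors hp).two_le
    exact div_nonneg (sq_nonneg _) (quartic_pos hp2).le

lemma Qfun_prime_le {p : ℕ} (hp : p.Prime) : Qfun p ≤ 4 / (p : ℝ) ^ 2 := by
  have hp2 : (2 : ℝ) ≤ p := by exact_mod_cast hp.two_le
  rw [Qfun_prime hp, div_le_div_iff₀ (quartic_pos hp2) (by positivity)]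
  nlinarith [pow_four_div_four_le hp2]

noncomputable def QSummand (s : ℂ) (d : ℕ) : ℂ := (Qfun d : ℂ) * (d : ℂ) ^ (-s)

lemma QSummand_zero (s : ℂ) : QSummand s 0 = 0 := by simp [QSummand, Qfun_zero]

lemma QSummand_one (s : ℂ) : QSummand s 1 = 1 := by simp [QSummand, Qfun_one]

lemma QSummand_mul (s : ℂ) {m n : ℕ} (h : m.Coprime n) :
    QSummand s (m * n) = QSummand s m * QSummand s n := by
  simp only [QSummand, Qfun_mul h, Nat.cast_mul, Complex.natCast_mul_natCast_cpow,
    Complex.ofReal_mul]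
  ring

lemma QSummand_prime_pow (s : ℂ) {p e : ℕ} (hp : p.Prime) (he : 2 ≤ e) :
    QSummand s (p ^ e) = 0 := by
  simp [QSummand, Qfun_prime_pow hp he]

lemma norm_QSummand (s : ℂ) (d : ℕ) : ‖QSummand s d‖ = Qfun d * (d : ℝ) ^ (-s.re) := by
  rcases Nat.eq_zero_or_pos d with rfl | hd
  · simp [QSummand_zero, Qfun_zero]
  rw [QSummand, norm_mul, Complex.norm_real, Real.norm_of_nonneg (Qfun_nonneg d),
    Complex.norm_natCast_cpow_of_pos hd, Complex.neg_re]

lemma summable_norm_QSummand {s : ℂ} (hs : -1 < s.re) : Summable (‖QSummand s ·‖) := by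
  refine summable_of_multiplicative_of_summable_primes (fun _ ↦ norm_nonneg _)
    (by simp [QSummand_zero]) (by simp [QSummand_one])
    (fun h ↦ by rw [QSummand_mul s h, norm_mul])
    (fun p e hp he ↦ by simp [QSummand_prime_pow s hp he]) ?_
  refine ((Nat.Primes.summable_rpow.mpr (by linarith : -s.re - 2 < -1)).mul_left 4).of_nonneg_of_le
    (fun _ ↦ norm_nonneg _) fun p ↦ ?_
  have hp : (0 : ℝ) < (p : ℕ) := by exact_mod_cast p.prop.pos
  calc ‖QSummand s p‖ = Qfun p * ((p : ℕ) : ℝ) ^ (-s.re) := norm_QSummand s p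
    _ ≤ 4 / ((p : ℕ) : ℝ) ^ 2 * ((p : ℕ) : ℝ) ^ (-s.re) := by
        gcongr
        exact Qfun_prime_le p.prop
    _ = 4 * ((p : ℕ) : ℝ) ^ (-s.re - 2) := by
        rw [Real.rpow_sub hp, Real.rpow_two]
        ring

lemma hasProd_one_add_QSummand {s : ℂ} (hs : -1 < s.re) :
    HasProd (fun p : Nat.Primes ↦ 1 + QSummand s p) (∑' d, QSummand s d) := by
  convert EulerProduct.eulerProduct_hasProd (QSummand_one s) (QSummand_mul s)
    (summable_norm_QSummand hs) (QSummand_zero s) using 2 with p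
  exact (tsum_pow_eq_one_add (QSummand_one s) fun e ↦ QSummand_prime_pow s p.prop).symm

lemma norm_natCast_cpow_neg_lt_one {n : ℕ} (hn : 1 < n) {w : ℂ} (hw : 0 < w.re) :
    ‖(n : ℂ) ^ (-w)‖ < 1 := by
  rw [Complex.norm_natCast_cpow_of_pos (by omega), Complex.neg_re]
  exact Real.rpow_lt_one_of_one_lt_of_neg (by exact_mod_cast hn) (by linarith)

lemma eulerFac_mul_one_add {s : ℂ} (hs : -2 < s.re) (p : Nat.Primes) :
    eulerFac s p * (1 + (p : ℂ) ^ (-(s + 2))) = 1 + QSummand s p := by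
  have hD := Complex.ofReal_ne_zero.mpr (quartic_pos (x := (p : ℕ))
    (by exact_mod_cast p.prop.two_le)).ne'
  have hy_lt := norm_natCast_cpow_neg_lt_one p.prop.one_lt (w := s + 2)
    (by simp only [Complex.add_re, Complex.re_ofNat]; linarith)
  rw [eulerFac, QSummand, Qfun_prime p.prop]
  push_cast at hD ⊢
  set q : ℂ := ((p : ℕ) : ℂ)
  set y := q ^ (-(s + 2)) with hy_def
  have hq : q ≠ 0 := by simp [q, p.prop.ne_zero]
  have hy : y ≠ 0 := by simp [y, hq]
  have hy₁ : 1 + y ≠ 0 := fun h ↦ by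
    simp [eq_neg_of_add_eq_zero_right h] at hy_lt
  have hpow : q ^ ((2 : ℂ) + s) = y⁻¹ := by
    rw [hy_def, ← Complex.cpow_neg, neg_neg, add_comm]
  have hQ : q ^ (-s) = y * q ^ 2 := by
    rw [hy_def, ← Complex.cpow_two, ← Complex.cpow_add _ _ hq]
    ring_nf
  have hy_inv : 1 + y⁻¹ = (1 + y) / y := by field_simp; ring
  rw [hpow, hQ, hy_inv]
  -- an opaque `D` is cancelled by `field_simp` instead of being expanded
  set D := q ^ 4 - 2 * q ^ 2 - q + 1 with hD_def
  field_simp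
  rw [hD_def]
  ring

lemma eulerFac_eq {s : ℂ} (hs : -2 < s.re) (p : Nat.Primes) :
    eulerFac s p =
      (1 + QSummand s p) * (1 - (p : ℂ) ^ (-(2 * s + 4)))⁻¹ / (1 - (p : ℂ) ^ (-(s + 2)))⁻¹ := by
  have hq : ((p : ℕ) : ℂ) ≠ 0 := by exact_mod_cast p.prop.ne_zero
  have hy_lt := norm_natCast_cpow_neg_lt_one p.prop.one_lt (w := s + 2)
    (by simp only [Complex.add_re, Complex.re_ofNat]; linarith)
  rw [← eulerFac_mul_one_add hs p, show -(2 * s + 4) = -(s + 2) + -(s + 2) by ring,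
    Complex.cpow_add _ _ hq]
  set y := ((p : ℕ) : ℂ) ^ (-(s + 2))
  have hy₁ : 1 + y ≠ 0 := fun h ↦ by simp [eq_neg_of_add_eq_zero_right h] at hy_lt
  have hy₂ : 1 - y ≠ 0 := fun h ↦ by simp [← sub_eq_zero.mp h] at hy_lt
  have hy₃ : 1 - y ^ 2 ≠ 0 := by
    rw [show 1 - y ^ 2 = (1 - y) * (1 + y) by ring]
    exact mul_ne_zero hy₂ hy₁
  field_simp
  ring

theorem stmt16 (s : ℂ) (hs : -1 < s.re) :
    Summable (fun d : ℕ => ((Qfun d : ℝ) : ℂ) * (d : ℂ) ^ (-s)) ∧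
    Multipliable (eulerFac s) ∧
    (∑' d : ℕ, ((Qfun d : ℝ) : ℂ) * (d : ℂ) ^ (-s)) =
      riemannZeta (s + 2) / riemannZeta (2 * s + 4) * ∏' p : Nat.Primes, eulerFac s p := by
  change Summable (QSummand s) ∧ Multipliable (eulerFac s) ∧
    ∑' d, QSummand s d = riemannZeta (s + 2) / riemannZeta (2 * s + 4) * ∏' p, eulerFac s p
  have hre₁ : 1 < (s + 2).re := by simp only [Complex.add_re, Complex.re_ofNat]; linarith
  have hre₂ : 1 < (2 * s + 4).re := by
    simp only [Complex.add_re, Complex.mul_re, Complex.re_ofNat, Complex.im_ofNat, zero_mul,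
      sub_zero]
    linarith
  have hζ₁ := riemannZeta_ne_zero_of_one_lt_re hre₁
  have hζ₂ := riemannZeta_ne_zero_of_one_lt_re hre₂
  have hE : HasProd (eulerFac s)
      ((∑' d, QSummand s d) * riemannZeta (2 * s + 4) / riemannZeta (s + 2)) :=
    (((hasProd_one_add_QSummand hs).mul (riemannZeta_eulerProduct_hasProd hre₂)).div₀
      (riemannZeta_eulerProduct_hasProd hre₁) hζ₁).congr_fun (eulerFac_eq (by linarith))
  refine ⟨(summable_norm_QSummand hs).of_norm, hE.multipliable, ?_⟩
  rw [hE.tprod_eq]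
  generalize riemannZeta (s + 2) = ζ₁ at hζ₁
  generalize riemannZeta (2 * s + 4) = ζ₂ at hζ₂
  field_simp
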